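/- Let f be a discrete Morse-Bott function on a finite abstract simplicial complex K and let C^red be a reduced collection for f. Then the set (closure of C^red) ∖ C^red is a subcomplex of K, i.e., it is closed under taking nonempty subsets. -/

import Mathlib

/-!
Cells of a reduced collection are extremal along inclusion chains leaving `C`: if `τ ∈ C^red`
and `w ⊆ τ` lies outside `C`, then `f w ≤ f τ`, and dually for cells above a cell of `C^red`.
This is proved one facet at a time: `w ⊂ τ` of codimension at least two has two cofaces
inside `τ`, and the Morse–Bott bound lets at most one of them be a descent out of the
collection of `w`.
Now if `ν ⊆ σ ⊆ τ` with `ν, τ ∈ C^red`, then `f ν ≤ f σ ≤ f τ = f ν` forces `σ ∈ C` by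
maximality of `C`, and the same two inequalities rule out every noncritical facet or coface
of `σ`, so `σ ∈ C^red`.
-/

open Finset

noncomputable section
open scoped Classical

/-- `σ` is a facet of `τ`: `σ ⊆ τ` and `dim σ = dim τ − 1`. -/
def Facet (σ τ : Finset ℕ) : Prop := σ ⊆ τ ∧ σ.card + 1 = τ.card

/-- A finite abstract simplicial complex: a finite family of nonempty finite sets
closed under taking nonempty subsets. -/
def IsComplex (K : Finset (Finset ℕ)) : Prop :=
  (∀ σ ∈ K, σ.Nonempty) ∧ ∀ σ ∈ K, ∀ ν, ν ⊆ σ → ν.Nonempty → ν ∈ K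

/-- The closure of a set of cells: all nonempty subsets of its cells. -/
def closureOf (S : Finset (Finset ℕ)) : Finset (Finset ℕ) :=
  S.biUnion fun σ => σ.powerset.filter fun ν => ν ≠ ∅

/-- The graph on `C` joining two cells whenever their closures intersect is connected. -/
def ConnectedOn (C : Finset (Finset ℕ)) : Prop :=
  ∀ a ∈ C, ∀ b ∈ C,
    Relation.ReflTransGen
      (fun x y => x ∈ C ∧ y ∈ C ∧ (closureOf {x} ∩ closureOf {y}).Nonempty) a b

/-- A nonempty set of cells of `K`, all with the same `f`-value, whose
closure-intersection graph is connected. -/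
def IsPreCollection (K : Finset (Finset ℕ)) (f : Finset ℕ → ℝ) (C : Finset (Finset ℕ)) :
    Prop :=
  C ⊆ K ∧ C.Nonempty ∧ (∀ σ ∈ C, ∀ τ ∈ C, f σ = f τ) ∧ ConnectedOn C

/-- A collection for `f`: a maximal constant-value connected set of cells. -/
def IsCollection (K : Finset (Finset ℕ)) (f : Finset ℕ → ℝ) (C : Finset (Finset ℕ)) :
    Prop :=
  IsPreCollection K f C ∧ ∀ C', IsPreCollection K f C' → C ⊆ C' → C' = C

/-- `#{τ ∉ C : σ < τ, f(τ) < f(σ)}`. -/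
def UpCount (K : Finset (Finset ℕ)) (f : Finset ℕ → ℝ) (C : Finset (Finset ℕ))
    (σ : Finset ℕ) : ℕ :=
  (K.filter fun τ => τ ∉ C ∧ Facet σ τ ∧ f τ < f σ).card

/-- `#{ν ∉ C : ν < σ, f(ν) > f(σ)}`. -/
def DownCount (K : Finset (Finset ℕ)) (f : Finset ℕ → ℝ) (C : Finset (Finset ℕ))
    (σ : Finset ℕ) : ℕ :=
  (K.filter fun ν => ν ∉ C ∧ Facet ν σ ∧ f σ < f ν).card

/-- A discrete Morse-Bott function on `K`. -/
def IsMorseBott (K : Finset (Finset ℕ)) (f : Finset ℕ → ℝ) : Prop :=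
  ∀ C, IsCollection K f C → ∀ σ ∈ C, UpCount K f C σ ≤ 1 ∧ DownCount K f C σ ≤ 1

/-- `σ` is upward noncritical w.r.t. `C`. -/
def UpNoncrit (K : Finset (Finset ℕ)) (f : Finset ℕ → ℝ) (C : Finset (Finset ℕ))
    (σ : Finset ℕ) : Prop :=
  ∃ w ∈ K, w ∉ C ∧ Facet σ w ∧ f w < f σ

/-- `σ` is downward noncritical w.r.t. `C`. -/
def DownNoncrit (K : Finset (Finset ℕ)) (f : Finset ℕ → ℝ) (C : Finset (Finset ℕ))
    (σ : Finset ℕ) : Prop :=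
  ∃ w ∈ K, w ∉ C ∧ Facet w σ ∧ f σ < f w

/-- The reduced collection `C^red`: the cells of `C` that are neither upward nor
downward noncritical w.r.t. `C`. -/
def reducedOf (K : Finset (Finset ℕ)) (f : Finset ℕ → ℝ) (C : Finset (Finset ℕ)) :
    Finset (Finset ℕ) :=
  C.filter fun σ => ¬ UpNoncrit K f C σ ∧ ¬ DownNoncrit K f C σ

/-- A noncritical pair: a two-element set `{σ, τ}` with `σ < τ` and `f σ ≥ f τ`. -/
def IsNoncritPair (f : Finset ℕ → ℝ) (S : Finset (Finset ℕ)) : Prop :=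
  ∃ σ τ, Facet σ τ ∧ f τ ≤ f σ ∧ S = {σ, τ}

/-- A discrete Morse function in Forman's sense. -/
def IsDiscreteMorse (K : Finset (Finset ℕ)) (g : Finset ℕ → ℝ) : Prop :=
  ∀ σ ∈ K, (K.filter fun τ => Facet σ τ ∧ g τ ≤ g σ).card ≤ 1 ∧
    (K.filter fun ν => Facet ν σ ∧ g σ ≤ g ν).card ≤ 1

/-- A critical cell of `g`. -/
def IsCritical (K : Finset (Finset ℕ)) (g : Finset ℕ → ℝ) (σ : Finset ℕ) : Prop :=
  σ ∈ K ∧ (K.filter fun τ => Facet σ τ ∧ g τ ≤ g σ).card = 0 ∧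
    (K.filter fun ν => Facet ν σ ∧ g σ ≤ g ν).card = 0

lemma mem_closureOf {S : Finset (Finset ℕ)} {ν : Finset ℕ} :
    ν ∈ closureOf S ↔ ∃ σ ∈ S, ν ⊆ σ ∧ ν.Nonempty := by
  simp [closureOf, nonempty_iff_ne_empty]

lemma ConnectedOn.insert_of_inter_nonempty {C : Finset (Finset ℕ)} (hC : ConnectedOn C)
    {u β : Finset ℕ} (hβ : β ∈ C) (huβ : (u ∩ β).Nonempty) : ConnectedOn (insert u C) := by
  set R := fun x y => x ∈ insert u C ∧ y ∈ insert u C ∧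
    (closureOf {x} ∩ closureOf {y}).Nonempty
  obtain ⟨x, hx⟩ := huβ
  have hxu : {x} ∈ closureOf {u} :=
    mem_closureOf.mpr ⟨u, mem_singleton_self u, by simp [(mem_inter.mp hx).1]⟩
  have hxβ : {x} ∈ closureOf {β} :=
    mem_closureOf.mpr ⟨β, mem_singleton_self β, by simp [(mem_inter.mp hx).2]⟩
  have hlift : ∀ a b, (a ∈ C ∧ b ∈ C ∧ (closureOf {a} ∩ closureOf {b}).Nonempty) → R a b :=
    fun a b ⟨ha, hb, hab⟩ => ⟨mem_insert_of_mem ha, mem_insert_of_mem hb, hab⟩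
  have from_β : ∀ a ∈ insert u C, Relation.ReflTransGen R β a := by
    intro a ha
    rcases mem_insert.mp ha with rfl | ha
    · exact .single ⟨mem_insert_of_mem hβ, mem_insert_self _ _, ⟨{x}, mem_inter.mpr ⟨hxβ, hxu⟩⟩⟩
    · exact Relation.ReflTransGen.mono hlift _ _ (hC β hβ a ha)
  have to_β : ∀ a ∈ insert u C, Relation.ReflTransGen R a β := by
    intro a ha
    rcases mem_insert.mp ha with rfl | ha
    · exact .single ⟨mem_insert_self _ _, mem_insert_of_mem hβ, ⟨{x}, mem_inter.mpr ⟨hxu, hxβ⟩⟩⟩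
    · exact Relation.ReflTransGen.mono hlift _ _ (hC a ha β hβ)
  exact fun a ha b hb => (to_β a ha).trans (from_β b hb)

lemma exists_isCollection_mem (K : Finset (Finset ℕ)) (f : Finset ℕ → ℝ) {w : Finset ℕ}
    (hw : w ∈ K) : ∃ C, IsCollection K f C ∧ w ∈ C := by
  set P := K.powerset.filter fun D => IsPreCollection K f D ∧ w ∈ D
  have hsingleton : {w} ∈ P := by
    refine mem_filter.mpr ⟨by simpa using hw, ⟨by simpa using hw, singleton_nonempty w, ?_, ?_⟩,
      mem_singleton_self w⟩
    · simp
    · intro a ha b hb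
      rw [mem_singleton.mp ha, mem_singleton.mp hb]
  obtain ⟨D, hDP, hDmax⟩ := P.exists_max_image card ⟨_, hsingleton⟩
  obtain ⟨-, hD, hwD⟩ := mem_filter.mp hDP
  refine ⟨D, ⟨hD, fun D' hD' hDD' => ?_⟩, hwD⟩
  have hD'P : D' ∈ P := mem_filter.mpr ⟨mem_powerset.mpr hD'.1, hD', hDD' hwD⟩
  exact (eq_of_subset_of_card_le hDD' (hDmax D' hD'P)).symm

section MorseBott

variable {K : Finset (Finset ℕ)} {f : Finset ℕ → ℝ} {C : Finset (Finset ℕ)}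

lemma IsPreCollection.insert_of_inter_nonempty (hC : IsPreCollection K f C) {u β : Finset ℕ}
    (hu : u ∈ K) (hβ : β ∈ C) (hfu : f u = f β) (huβ : (u ∩ β).Nonempty) :
    IsPreCollection K f (insert u C) := by
  obtain ⟨hCK, -, hconst, hconn⟩ := hC
  have hval : ∀ σ ∈ insert u C, f σ = f β := by
    intro σ hσ
    rcases mem_insert.mp hσ with rfl | hσ
    exacts [hfu, hconst σ hσ β hβ]
  exact ⟨insert_subset hu hCK, insert_nonempty u C,
    fun σ hσ τ hτ => (hval σ hσ).trans (hval τ hτ).symm, hconn.insert_of_inter_nonempty hβ huβ⟩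

lemma IsCollection.mem_of_inter_nonempty (hC : IsCollection K f C) {u β : Finset ℕ}
    (hu : u ∈ K) (hβ : β ∈ C) (hfu : f u = f β) (huβ : (u ∩ β).Nonempty) : u ∈ C := by
  rw [← hC.2 _ (hC.1.insert_of_inter_nonempty hu hβ hfu huβ) (subset_insert u C)]
  exact mem_insert_self u C

lemma IsMorseBott.exists_coface_le (hK : IsComplex K) (hf : IsMorseBott K f)
    {w τ : Finset ℕ} (hw : w ∈ K) (hτ : τ ∈ K) (hwτ : w ⊆ τ) (hcard : w.card + 2 ≤ τ.card) :
    ∃ u ∈ K, Facet w u ∧ u ⊆ τ ∧ f w ≤ f u := by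
  obtain ⟨C', hC', hwC'⟩ := exists_isCollection_mem K f hw
  obtain ⟨x, hx, y, hy, hxy⟩ := one_lt_card.mp (show 1 < (τ \ w).card by
    rw [card_sdiff_of_subset hwτ]; omega)
  by_contra! hdescent
  have hmem : ∀ z ∈ τ \ w, insert z w ∈ K.filter fun t => t ∉ C' ∧ Facet w t ∧ f t < f w := by
    intro z hz
    obtain ⟨hzτ, hzw⟩ := mem_sdiff.mp hz
    have hzK : insert z w ∈ K := hK.2 τ hτ _ (insert_subset hzτ hwτ) (insert_nonempty z w)
    have hfacet : Facet w (insert z w) := ⟨subset_insert z w, (card_insert_of_notMem hzw).symm⟩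
    have hlt := hdescent _ hzK hfacet (insert_subset hzτ hwτ)
    refine mem_filter.mpr ⟨hzK, fun hzC' => ?_, hfacet, hlt⟩
    exact hlt.ne (hC'.1.2.2.1 _ hzC' w hwC')
  have hne : insert x w ≠ insert y w := by
    rw [Ne, insert_inj (mem_sdiff.mp hx).2]; exact hxy
  have : 1 < UpCount K f C' w := one_lt_card.mpr ⟨_, hmem x hx, _, hmem y hy, hne⟩
  exact absurd (hf C' hC' w hwC').1 (by omega)

lemma IsMorseBott.exists_face_le (hK : IsComplex K) (hf : IsMorseBott K f)
    {ν w : Finset ℕ} (hν : ν.Nonempty) (hw : w ∈ K) (hνw : ν ⊆ w) (hcard : ν.card + 2 ≤ w.card) :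
    ∃ u ∈ K, Facet u w ∧ ν ⊆ u ∧ f u ≤ f w := by
  obtain ⟨C', hC', hwC'⟩ := exists_isCollection_mem K f hw
  obtain ⟨x, hx, y, hy, hxy⟩ := one_lt_card.mp (show 1 < (w \ ν).card by
    rw [card_sdiff_of_subset hνw]; omega)
  by_contra! hascent
  have hmem : ∀ z ∈ w \ ν, w.erase z ∈ K.filter fun t => t ∉ C' ∧ Facet t w ∧ f w < f t := by
    intro z hz
    obtain ⟨hzw, hzν⟩ := mem_sdiff.mp hz
    have hνz : ν ⊆ w.erase z := subset_erase.mpr ⟨hνw, hzν⟩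
    have hzK : w.erase z ∈ K := hK.2 w hw _ (erase_subset z w) (hν.mono hνz)
    have hfacet : Facet (w.erase z) w :=
      ⟨erase_subset z w, by rw [card_erase_of_mem hzw]; omega⟩
    have hlt := hascent _ hzK hfacet hνz
    refine mem_filter.mpr ⟨hzK, fun hzC' => ?_, hfacet, hlt⟩
    exact hlt.ne' (hC'.1.2.2.1 _ hzC' w hwC')
  have hne : w.erase x ≠ w.erase y := by
    rw [Ne, erase_inj w (mem_sdiff.mp hx).1]; exact hxy
  have : 1 < DownCount K f C' w := one_lt_card.mpr ⟨_, hmem x hx, _, hmem y hy, hne⟩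
  exact absurd (hf C' hC' w hwC').2 (by omega)

lemma le_of_subset_of_mem_reducedOf (hK : IsComplex K) (hf : IsMorseBott K f)
    (hC : IsCollection K f C) {τ : Finset ℕ} (hτ : τ ∈ reducedOf K f C) {w : Finset ℕ}
    (hw : w ∈ K) (hwτ : w ⊆ τ) (hwC : w ∉ C) : f w ≤ f τ := by
  obtain ⟨hτC, -, hτdown⟩ := mem_filter.mp hτ
  induction hn : τ.card - w.card using Nat.strong_induction_on generalizing w with
  | _ n ih =>
  have hlt : w.card < τ.card :=
    card_lt_card (ssubset_of_subset_of_ne hwτ (by rintro rfl; exact hwC hτC))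
  by_contra! hfw
  rcases (by omega : w.card + 1 = τ.card ∨ w.card + 2 ≤ τ.card) with hfacet | hcard
  · exact hτdown ⟨w, hw, hwC, ⟨hwτ, hfacet⟩, hfw⟩
  · obtain ⟨u, hu, ⟨-, hwu⟩, huτ, hfwu⟩ := hf.exists_coface_le hK hw (hC.1.1 hτC) hwτ hcard
    have huC : u ∉ C := fun huC => by linarith [hC.1.2.2.1 u huC τ hτC]
    linarith [ih _ (by omega) hu huτ huC rfl]

lemma le_of_superset_of_mem_reducedOf (hK : IsComplex K) (hf : IsMorseBott K f)
    (hC : IsCollection K f C) {ν : Finset ℕ} (hν : ν ∈ reducedOf K f C) {w : Finset ℕ}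
    (hw : w ∈ K) (hνw : ν ⊆ w) (hwC : w ∉ C) : f ν ≤ f w := by
  obtain ⟨hνC, hνup, -⟩ := mem_filter.mp hν
  have hνne : ν.Nonempty := hK.1 ν (hC.1.1 hνC)
  induction hn : w.card - ν.card using Nat.strong_induction_on generalizing w with
  | _ n ih =>
  have hlt : ν.card < w.card :=
    card_lt_card (ssubset_of_subset_of_ne hνw (by rintro rfl; exact hwC hνC))
  by_contra! hfw
  rcases (by omega : ν.card + 1 = w.card ∨ ν.card + 2 ≤ w.card) with hfacet | hcard
  · exact hνup ⟨w, hw, hwC, ⟨hνw, hfacet⟩, hfw⟩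
  · obtain ⟨u, hu, ⟨-, huw⟩, hνu, hfuw⟩ := hf.exists_face_le hK hνne hw hνw hcard
    have huC : u ∉ C := fun huC => by linarith [hC.1.2.2.1 u huC ν hνC]
    linarith [ih _ (by omega) hu hνu huC rfl]

end MorseBott

/-- `closure(C^red) ∖ C^red` is a subcomplex, i.e. closed under taking
nonempty subsets. -/
theorem statement5 (K : Finset (Finset ℕ)) (hK : IsComplex K) (f : Finset ℕ → ℝ)
    (hf : IsMorseBott K f) (C : Finset (Finset ℕ)) (hC : IsCollection K f C) :
    ∀ σ ∈ closureOf (reducedOf K f C) \ reducedOf K f C,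
      ∀ ν ⊆ σ, ν.Nonempty → ν ∈ closureOf (reducedOf K f C) \ reducedOf K f C := by
  intro σ hσ ν hνσ hν
  obtain ⟨hσcl, hσred⟩ := mem_sdiff.mp hσ
  obtain ⟨τ, hτ, hστ, hσne⟩ := mem_closureOf.mp hσcl
  refine mem_sdiff.mpr ⟨mem_closureOf.mpr ⟨τ, hτ, hνσ.trans hστ, hν⟩, fun hνred => hσred ?_⟩
  have hτC : τ ∈ C := (mem_filter.mp hτ).1
  have hνC : ν ∈ C := (mem_filter.mp hνred).1
  have hσK : σ ∈ K := hK.2 τ (hC.1.1 hτC) σ hστ hσne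
  have hfντ : f ν = f τ := hC.1.2.2.1 ν hνC τ hτC
  have hσC : σ ∈ C := by
    by_contra hσC
    have := le_of_superset_of_mem_reducedOf hK hf hC hνred hσK hνσ hσC
    have := le_of_subset_of_mem_reducedOf hK hf hC hτ hσK hστ hσC
    exact hσC (hC.mem_of_inter_nonempty hσK hνC (by linarith) (by rwa [inter_eq_right.mpr hνσ]))
  have hfσν : f σ = f ν := hC.1.2.2.1 σ hσC ν hνC
  refine mem_filter.mpr ⟨hσC, ?_, ?_⟩
  · rintro ⟨w, hw, hwC, ⟨hσw, -⟩, hfw⟩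
    linarith [le_of_superset_of_mem_reducedOf hK hf hC hνred hw (hνσ.trans hσw) hwC]
  · rintro ⟨w, hw, hwC, ⟨hwσ, -⟩, hfw⟩
    linarith [le_of_subset_of_mem_reducedOf hK hf hC hτ hw (hwσ.trans hστ) hwC]
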